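/- In the graph H[s,ℓ] built from a base graph H[s] of girth ≥ 5, every vertex lies in the ball B(r) = {v : dist(v, r) ≤ s + ℓ} around exactly one root r ∈ R, where R is the set of roots of the trees T(a). Moreover, if a and b are distinct non-adjacent vertices of H[s], then any v ∈ B(r(a)) and w ∈ B(r(b)) satisfy dist_{H[s,ℓ]}(v, w) > 2ℓ. -/
import Mathlib


/-- Vertices of the complete balanced binary tree of height `s`: binary strings
of length at most `s`; the root is the empty string, leaves have length `s`. -/
abbrev TreeNode (s : ℕ) := {l : List Bool // l.length ≤ s}

/-- Vertices of `H[s,ℓ]`: for every vertex `a` of the base graph a copy of the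
binary tree `T(a)`, and for every oriented edge `ab` (i.e. `D a b`) the `2ℓ`
inner vertices of the connecting path `P(ab)` of length `2ℓ+1`. -/
abbrev HslVert (s ℓ : ℕ) (A : Type*) (D : A → A → Prop) :=
  (A × TreeNode s) ⊕ ({p : A × A // D p.1 p.2} × Fin (2 * ℓ))

/-- The graph `H[s,ℓ]`. -/
def hsl (s ℓ : ℕ) {A : Type*} (D : A → A → Prop)
    (outLeaf inLeaf : A → A → List Bool) : SimpleGraph (HslVert s ℓ A D) :=
  SimpleGraph.fromRel (fun x y =>
    match x, y with
    | Sum.inl (a, l), Sum.inl (a', l') => a = a' ∧ ∃ b, l'.val = l.val ++ [b]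
    | Sum.inl (a, l), Sum.inr (e, i) =>
        (a = e.val.1 ∧ l.val = outLeaf e.val.1 e.val.2 ∧ (i : ℕ) = 0) ∨
        (a = e.val.2 ∧ l.val = inLeaf e.val.2 e.val.1 ∧ (i : ℕ) = 2 * ℓ - 1)
    | Sum.inr (e, i), Sum.inr (e', j) => e = e' ∧ (j : ℕ) = (i : ℕ) + 1
    | _, _ => False)

/-- The root `r(a)` of the tree `T(a)` in `H[s,ℓ]`. -/
def hslRoot (s ℓ : ℕ) {A : Type*} (D : A → A → Prop) (a : A) : HslVert s ℓ A D :=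
  Sum.inl (a, ⟨[], by simp⟩)

/-- The ball `B(r(a))`: all vertices of `H[s,ℓ]` at distance at most `s + ℓ`
from the root `r(a)`. -/
def hslBall (s ℓ : ℕ) {A : Type*} (D : A → A → Prop)
    (outLeaf inLeaf : A → A → List Bool) (a : A) : Set (HslVert s ℓ A D) :=
  {v | (hsl s ℓ D outLeaf inLeaf).dist v (hslRoot s ℓ D a) ≤ s + ℓ}


section aux
variable {s ℓ : ℕ} {A : Type*} {D : A → A → Prop} {outLeaf inLeaf : A → A → List Bool}

lemma adj_tree (c : A) (l l' : TreeNode s) (b : Bool) (hb : l'.val = l.val ++ [b]) :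
    (hsl s ℓ D outLeaf inLeaf).Adj (Sum.inl (c, l)) (Sum.inl (c, l')) := by
  refine ⟨?_, Or.inl ⟨rfl, b, hb⟩⟩
  intro h
  simp only [Sum.inl.injEq, Prod.mk.injEq, true_and] at h
  have := congrArg (fun t : TreeNode s => t.val.length) h
  simp [hb] at this

lemma adj_out (e : {p : A × A // D p.1 p.2}) (l : TreeNode s) (i : Fin (2 * ℓ))
    (hl : l.val = outLeaf e.val.1 e.val.2) (hi : (i : ℕ) = 0) :
    (hsl s ℓ D outLeaf inLeaf).Adj (Sum.inl (e.val.1, l)) (Sum.inr (e, i)) :=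
  ⟨by simp, Or.inl (Or.inl ⟨rfl, hl, hi⟩)⟩

lemma adj_in (e : {p : A × A // D p.1 p.2}) (l : TreeNode s) (i : Fin (2 * ℓ))
    (hl : l.val = inLeaf e.val.2 e.val.1) (hi : (i : ℕ) = 2 * ℓ - 1) :
    (hsl s ℓ D outLeaf inLeaf).Adj (Sum.inl (e.val.2, l)) (Sum.inr (e, i)) :=
  ⟨by simp, Or.inl (Or.inr ⟨rfl, hl, hi⟩)⟩

lemma adj_path (e : {p : A × A // D p.1 p.2}) (i j : Fin (2 * ℓ)) (h : (j : ℕ) = (i : ℕ) + 1) :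
    (hsl s ℓ D outLeaf inLeaf).Adj (Sum.inr (e, i)) (Sum.inr (e, j)) := by
  refine ⟨?_, Or.inl ⟨rfl, h⟩⟩
  intro hxy
  simp only [Sum.inr.injEq, Prod.mk.injEq, true_and] at hxy
  subst hxy
  omega

lemma walk_tree (c : A) : ∀ (l : List Bool) (h : l.length ≤ s),
    ∃ p : (hsl s ℓ D outLeaf inLeaf).Walk (Sum.inl (c, ⟨l, h⟩)) (hslRoot s ℓ D c),
      p.length = l.length := by
  intro l
  induction l using List.reverseRecOn with
  | nil => exact fun h => ⟨SimpleGraph.Walk.nil, rfl⟩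
  | append_singleton xs b ih =>
    intro h
    have hxs : xs.length ≤ s := by simp at h; omega
    obtain ⟨p, hp⟩ := ih hxs
    refine ⟨SimpleGraph.Walk.cons ((adj_tree c ⟨xs, hxs⟩ ⟨xs ++ [b], h⟩ b rfl).symm) p, ?_⟩
    simp [hp]


lemma walk_path_out (e : {p : A × A // D p.1 p.2})
    (hlen : (outLeaf e.val.1 e.val.2).length = s) :
    ∀ (i : ℕ) (h : i < 2 * ℓ),
    ∃ p : (hsl s ℓ D outLeaf inLeaf).Walk (Sum.inr (e, ⟨i, h⟩)) (hslRoot s ℓ D e.val.1),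
      p.length = i + 1 + s := by
  intro i
  induction i with
  | zero =>
    intro h
    obtain ⟨p, hp⟩ := walk_tree (D := D) (outLeaf := outLeaf) (inLeaf := inLeaf)
      e.val.1 (outLeaf e.val.1 e.val.2) (le_of_eq hlen)
    refine ⟨SimpleGraph.Walk.cons
      ((adj_out e ⟨outLeaf e.val.1 e.val.2, le_of_eq hlen⟩ ⟨0, h⟩ rfl rfl).symm) p, ?_⟩
    simp [hp, hlen]; omega
  | succ i ih =>
    intro h
    obtain ⟨p, hp⟩ := ih (by omega)
    refine ⟨SimpleGraph.Walk.cons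
      ((adj_path e ⟨i, by omega⟩ ⟨i + 1, h⟩ rfl).symm) p, ?_⟩
    simp [hp]; omega

lemma walk_path_in_aux (e : {p : A × A // D p.1 p.2})
    (hlen : (inLeaf e.val.2 e.val.1).length = s) :
    ∀ (j i : ℕ) (hij : i + j = 2 * ℓ - 1) (h : i < 2 * ℓ),
    ∃ p : (hsl s ℓ D outLeaf inLeaf).Walk (Sum.inr (e, ⟨i, h⟩)) (hslRoot s ℓ D e.val.2),
      p.length = j + 1 + s := by
  intro j
  induction j with
  | zero =>
    intro i hij h
    obtain ⟨p, hp⟩ := walk_tree (D := D) (outLeaf := outLeaf) (inLeaf := inLeaf)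
      e.val.2 (inLeaf e.val.2 e.val.1) (le_of_eq hlen)
    refine ⟨SimpleGraph.Walk.cons
      ((adj_in e ⟨inLeaf e.val.2 e.val.1, le_of_eq hlen⟩ ⟨i, h⟩ rfl (by simp; omega)).symm)
      p, ?_⟩
    simp [hp, hlen]; omega
  | succ j ih =>
    intro i hij h
    obtain ⟨p, hp⟩ := ih (i + 1) (by omega) (by omega)
    refine ⟨SimpleGraph.Walk.cons
      (adj_path e ⟨i, h⟩ ⟨i + 1, by omega⟩ rfl) p, ?_⟩
    simp [hp]; omega

lemma walk_path_in (e : {p : A × A // D p.1 p.2})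
    (hlen : (inLeaf e.val.2 e.val.1).length = s) (i : ℕ) (h : i < 2 * ℓ) :
    ∃ p : (hsl s ℓ D outLeaf inLeaf).Walk (Sum.inr (e, ⟨i, h⟩)) (hslRoot s ℓ D e.val.2),
      p.length = (2 * ℓ - i) + s := by
  obtain ⟨p, hp⟩ := walk_path_in_aux e hlen (2 * ℓ - 1 - i) i (by omega) h
  exact ⟨p, by omega⟩

lemma root_reach_adj {H : SimpleGraph A} (hℓ : 1 ≤ ℓ)
    (hDor : ∀ a b, (D a b ∨ D b a) ↔ H.Adj a b)
    (hout : ∀ a b, D a b → (outLeaf a b).length = s)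
    (hin : ∀ a b, D a b → (inLeaf b a).length = s)
    {c d : A} (h : H.Adj c d) :
    (hsl s ℓ D outLeaf inLeaf).Reachable (hslRoot s ℓ D c) (hslRoot s ℓ D d) := by
  have hpos : (0 : ℕ) < 2 * ℓ := by omega
  rcases (hDor c d).2 h with hD | hD
  · obtain ⟨p1, _⟩ := walk_path_out (⟨(c, d), hD⟩ : {p : A × A // D p.1 p.2})
      (hout c d hD) 0 hpos
    obtain ⟨p2, _⟩ := walk_path_in (⟨(c, d), hD⟩ : {p : A × A // D p.1 p.2})
      (hin c d hD) 0 hpos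
    exact (SimpleGraph.Walk.reachable p1).symm.trans (SimpleGraph.Walk.reachable p2)
  · obtain ⟨p1, _⟩ := walk_path_out (⟨(d, c), hD⟩ : {p : A × A // D p.1 p.2})
      (hout d c hD) 0 hpos
    obtain ⟨p2, _⟩ := walk_path_in (⟨(d, c), hD⟩ : {p : A × A // D p.1 p.2})
      (hin d c hD) 0 hpos
    exact (SimpleGraph.Walk.reachable p2).symm.trans (SimpleGraph.Walk.reachable p1)

lemma root_reach {H : SimpleGraph A} (hℓ : 1 ≤ ℓ) (hconn : H.Connected)
    (hDor : ∀ a b, (D a b ∨ D b a) ↔ H.Adj a b)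
    (hout : ∀ a b, D a b → (outLeaf a b).length = s)
    (hin : ∀ a b, D a b → (inLeaf b a).length = s)
    (c d : A) :
    (hsl s ℓ D outLeaf inLeaf).Reachable (hslRoot s ℓ D c) (hslRoot s ℓ D d) := by
  obtain ⟨w⟩ := hconn c d
  induction w with
  | nil => exact SimpleGraph.Reachable.refl _
  | cons hadj w ih => exact (root_reach_adj hℓ hDor hout hin hadj).trans ih

lemma vert_reach_root (hout : ∀ a b, D a b → (outLeaf a b).length = s)
    (v : HslVert s ℓ A D) :
    ∃ c : A, (hsl s ℓ D outLeaf inLeaf).Reachable v (hslRoot s ℓ D c) := by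
  rcases v with ⟨c, l⟩ | ⟨e, i⟩
  · obtain ⟨p, _⟩ := walk_tree (D := D) (outLeaf := outLeaf) (inLeaf := inLeaf) c l.val l.prop
    exact ⟨c, SimpleGraph.Walk.reachable p⟩
  · obtain ⟨p, _⟩ := walk_path_out e (hout _ _ e.prop) i.val i.isLt
    exact ⟨e.val.1, SimpleGraph.Walk.reachable p⟩

lemma hsl_connected {H : SimpleGraph A} (hℓ : 1 ≤ ℓ) (hconn : H.Connected)
    (hDor : ∀ a b, (D a b ∨ D b a) ↔ H.Adj a b)
    (hout : ∀ a b, D a b → (outLeaf a b).length = s)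
    (hin : ∀ a b, D a b → (inLeaf b a).length = s) :
    (hsl s ℓ D outLeaf inLeaf).Connected := by
  have hne : Nonempty A := hconn.nonempty
  obtain ⟨a0⟩ := hne
  have : Nonempty (HslVert s ℓ A D) := ⟨hslRoot s ℓ D a0⟩
  apply SimpleGraph.Connected.mk
  intro v w
  obtain ⟨c, hc⟩ := vert_reach_root hout v
  obtain ⟨d, hd⟩ := vert_reach_root hout w
  exact (hc.trans (root_reach hℓ hconn hDor hout hin c d)).trans hd.symm

end aux

open Classical in
noncomputable def phi (s ℓ : ℕ) {A : Type*} (H : SimpleGraph A) (D : A → A → Prop)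
    (a : A) : HslVert s ℓ A D → ℕ
  | Sum.inl (c, l) =>
      if c = a then l.val.length else (s - l.val.length) + s + H.dist a c * (2 * ℓ + 1)
  | Sum.inr (e, i) =>
      min ((i : ℕ) + 1 + s + H.dist a e.val.1 * (2 * ℓ + 1))
        ((2 * ℓ - (i : ℕ)) + s + H.dist a e.val.2 * (2 * ℓ + 1))

section phisec
variable {s ℓ : ℕ} {A : Type*} {H : SimpleGraph A} {D : A → A → Prop}
  {outLeaf inLeaf : A → A → List Bool}

lemma dist_adj_le (hconn : H.Connected) {c d : A} (h : H.Adj c d) (a : A) :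
    H.dist a c ≤ H.dist a d + 1 := by
  have h1 : H.dist a c ≤ H.dist a d + H.dist d c := hconn.dist_triangle
  have h2 : H.dist d c ≤ 1 := by
    simpa using SimpleGraph.dist_le h.symm.toWalk
  omega

lemma gmul_le (hconn : H.Connected) {c d : A} (h : H.Adj c d) (a : A) :
    H.dist a c * (2 * ℓ + 1) ≤ H.dist a d * (2 * ℓ + 1) + (2 * ℓ + 1) := by
  calc H.dist a c * (2 * ℓ + 1) ≤ (H.dist a d + 1) * (2 * ℓ + 1) :=
        Nat.mul_le_mul_right _ (dist_adj_le hconn h a)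
    _ = H.dist a d * (2 * ℓ + 1) + (2 * ℓ + 1) := by ring

lemma phi_leaf (a c : A) (l : TreeNode s) (hl : l.val.length = s) :
    phi s ℓ H D a (Sum.inl (c, l)) = s + H.dist a c * (2 * ℓ + 1) := by
  simp only [phi]
  split_ifs with hca
  · subst hca
    simp [hl, SimpleGraph.dist_self]
  · simp [hl]

lemma phi_lip (hconn : H.Connected)
    (hDor : ∀ a b, (D a b ∨ D b a) ↔ H.Adj a b)
    (hout : ∀ a b, D a b → (outLeaf a b).length = s)
    (hin : ∀ a b, D a b → (inLeaf b a).length = s)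
    (a : A) {x y : HslVert s ℓ A D}
    (h : (hsl s ℓ D outLeaf inLeaf).Adj x y) :
    phi s ℓ H D a x ≤ phi s ℓ H D a y + 1 := by
  obtain ⟨-, h | h⟩ := h
  · -- h : rel x y
    rcases x with ⟨c, l⟩ | ⟨e, i⟩ <;> rcases y with ⟨c', l'⟩ | ⟨e', i'⟩
    · -- tree edge, downward
      obtain ⟨rfl, b, hb⟩ := h
      have hlen : l'.val.length = l.val.length + 1 := by rw [hb]; simp
      have hls : l'.val.length ≤ s := l'.prop
      simp only [phi]
      split_ifs
      · omega
      · generalize H.dist a c * (2 * ℓ + 1) = g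
        omega
    · -- leaf to path
      rcases h with ⟨rfl, hl, hi⟩ | ⟨rfl, hl, hi⟩
      · have hlval : l.val.length = s := by rw [hl]; exact (hout _ _ e'.prop)
        rw [phi_leaf a _ l hlval]
        have key := gmul_le (ℓ := ℓ) hconn ((hDor _ _).1 (Or.inl e'.prop)) a
        have hI : (i' : ℕ) < 2 * ℓ := i'.isLt
        simp only [phi, hi]
        revert key
        generalize H.dist a e'.val.1 * (2 * ℓ + 1) = g1
        generalize H.dist a e'.val.2 * (2 * ℓ + 1) = g2
        omega
      · have hlval : l.val.length = s := by rw [hl]; exact (hin _ _ e'.prop)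
        rw [phi_leaf a _ l hlval]
        have key := gmul_le (ℓ := ℓ) hconn ((hDor _ _).1 (Or.inl e'.prop)).symm a
        have hI : (i' : ℕ) < 2 * ℓ := i'.isLt
        simp only [phi, hi]
        revert key
        generalize H.dist a e'.val.1 * (2 * ℓ + 1) = g1
        generalize H.dist a e'.val.2 * (2 * ℓ + 1) = g2
        omega
    · exact h.elim
    · -- path edge forward
      obtain ⟨rfl, hij⟩ := h
      have hI : (i' : ℕ) < 2 * ℓ := i'.isLt
      simp only [phi, hij]
      generalize H.dist a e.val.1 * (2 * ℓ + 1) = g1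
      generalize H.dist a e.val.2 * (2 * ℓ + 1) = g2
      omega
  · -- h : rel y x
    rcases x with ⟨c, l⟩ | ⟨e, i⟩ <;> rcases y with ⟨c', l'⟩ | ⟨e', i'⟩
    · obtain ⟨rfl, b, hb⟩ := h
      have hlen : l.val.length = l'.val.length + 1 := by rw [hb]; simp
      have hls : l.val.length ≤ s := l.prop
      simp only [phi]
      split_ifs
      · omega
      · generalize H.dist a c' * (2 * ℓ + 1) = g
        omega
    · exact h.elim
    · rcases h with ⟨rfl, hl, hi⟩ | ⟨rfl, hl, hi⟩
      · have hlval : l'.val.length = s := by rw [hl]; exact (hout _ _ e.prop)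
        rw [phi_leaf a _ l' hlval]
        have key := gmul_le (ℓ := ℓ) hconn ((hDor _ _).1 (Or.inl e.prop)) a
        have hI : (i : ℕ) < 2 * ℓ := i.isLt
        simp only [phi, hi]
        revert key
        generalize H.dist a e.val.1 * (2 * ℓ + 1) = g1
        generalize H.dist a e.val.2 * (2 * ℓ + 1) = g2
        omega
      · have hlval : l'.val.length = s := by rw [hl]; exact (hin _ _ e.prop)
        rw [phi_leaf a _ l' hlval]
        have key := gmul_le (ℓ := ℓ) hconn ((hDor _ _).1 (Or.inl e.prop)).symm a
        have hI : (i : ℕ) < 2 * ℓ := i.isLt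
        simp only [phi, hi]
        revert key
        generalize H.dist a e.val.1 * (2 * ℓ + 1) = g1
        generalize H.dist a e.val.2 * (2 * ℓ + 1) = g2
        omega
    · obtain ⟨rfl, hij⟩ := h
      have hI : (i : ℕ) < 2 * ℓ := i.isLt
      simp only [phi, hij]
      generalize H.dist a e'.val.1 * (2 * ℓ + 1) = g1
      generalize H.dist a e'.val.2 * (2 * ℓ + 1) = g2
      omega

lemma phi_root (a : A) : phi s ℓ H D a (hslRoot s ℓ D a) = 0 := by
  simp [phi, hslRoot]

lemma phi_root' (a b : A) (hne : b ≠ a) :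
    phi s ℓ H D a (hslRoot s ℓ D b) = s + s + H.dist a b * (2 * ℓ + 1) := by
  simp only [phi, hslRoot]
  rw [if_neg hne]
  simp

lemma phi_le_walk (hconn : H.Connected)
    (hDor : ∀ a b, (D a b ∨ D b a) ↔ H.Adj a b)
    (hout : ∀ a b, D a b → (outLeaf a b).length = s)
    (hin : ∀ a b, D a b → (inLeaf b a).length = s)
    (a : A) : ∀ {v w : HslVert s ℓ A D}
    (p : (hsl s ℓ D outLeaf inLeaf).Walk v w),
    phi s ℓ H D a v ≤ phi s ℓ H D a w + p.length := by
  intro v w p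
  induction p with
  | nil => simp
  | cons hadj p ih =>
    have := phi_lip (H := H) hconn hDor hout hin a hadj
    simp only [SimpleGraph.Walk.length_cons]
    omega

lemma phi_le_dist (hGconn : (hsl s ℓ D outLeaf inLeaf).Connected)
    (hconn : H.Connected)
    (hDor : ∀ a b, (D a b ∨ D b a) ↔ H.Adj a b)
    (hout : ∀ a b, D a b → (outLeaf a b).length = s)
    (hin : ∀ a b, D a b → (inLeaf b a).length = s)
    (a : A) (v : HslVert s ℓ A D) :
    phi s ℓ H D a v ≤ (hsl s ℓ D outLeaf inLeaf).dist v (hslRoot s ℓ D a) := by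
  obtain ⟨p, hp⟩ := (hGconn v (hslRoot s ℓ D a)).exists_walk_length_eq_dist
  rw [← hp]
  have := phi_le_walk (H := H) hconn hDor hout hin a p
  rwa [phi_root, Nat.zero_add] at this

end phisec

/-- in `H[s,ℓ]` (built from a connected `2k`-regular base graph of
girth at least `5` with a balanced orientation), every vertex lies in the ball
`B(r(a))` of exactly one root, and vertices in balls of distinct non-adjacent
base vertices are at distance more than `2ℓ` from each other. -/
theorem stmt14 (s ℓ : ℕ) (hs : 1 ≤ s) (hℓ : 1 ≤ ℓ) {A : Type*}
    (H : SimpleGraph A) (hconn : H.Connected) (hgirth : 5 ≤ H.egirth)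
    (hreg : ∀ a, (H.neighborSet a).ncard = 2 * 2 ^ (s - 1))
    (D : A → A → Prop)
    (hDor : ∀ a b, (D a b ∨ D b a) ↔ H.Adj a b)
    (hDanti : ∀ a b, ¬(D a b ∧ D b a))
    (outLeaf inLeaf : A → A → List Bool)
    (hout : ∀ a b, D a b → (outLeaf a b).length = s ∧ (outLeaf a b).head? = some true)
    (hin : ∀ a b, D a b → (inLeaf b a).length = s ∧ (inLeaf b a).head? = some false)
    (houtinj : ∀ a b b', D a b → D a b' → outLeaf a b = outLeaf a b' → b = b')
    (hininj : ∀ b a a', D a b → D a' b → inLeaf b a = inLeaf b a' → a = a')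
    (houtsurj : ∀ a l, l.length = s → l.head? = some true → ∃ b, D a b ∧ outLeaf a b = l)
    (hinsurj : ∀ b l, l.length = s → l.head? = some false → ∃ a, D a b ∧ inLeaf b a = l) :
    (∀ v : HslVert s ℓ A D, ∃! a : A, v ∈ hslBall s ℓ D outLeaf inLeaf a) ∧
    (∀ a b : A, a ≠ b → ¬H.Adj a b →
      ∀ v ∈ hslBall s ℓ D outLeaf inLeaf a, ∀ w ∈ hslBall s ℓ D outLeaf inLeaf b,
        2 * ℓ < (hsl s ℓ D outLeaf inLeaf).dist v w) := by
  have houtlen : ∀ a b, D a b → (outLeaf a b).length = s := fun a b h => (hout a b h).1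
  have hinlen : ∀ a b, D a b → (inLeaf b a).length = s := fun a b h => (hin a b h).1
  have hGconn : (hsl s ℓ D outLeaf inLeaf).Connected :=
    hsl_connected hℓ hconn hDor houtlen hinlen
  -- distinct balls are disjoint
  have hsep : ∀ a a' : A, a ≠ a' → ∀ v : HslVert s ℓ A D,
      v ∈ hslBall s ℓ D outLeaf inLeaf a → v ∈ hslBall s ℓ D outLeaf inLeaf a' → False := by
    intro a a' hne v hva hva'
    have h1 : phi s ℓ H D a (hslRoot s ℓ D a') ≤
        (hsl s ℓ D outLeaf inLeaf).dist (hslRoot s ℓ D a') (hslRoot s ℓ D a) :=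
      phi_le_dist hGconn hconn hDor houtlen hinlen a _
    have h2 : (hsl s ℓ D outLeaf inLeaf).dist (hslRoot s ℓ D a') (hslRoot s ℓ D a) ≤
        (hsl s ℓ D outLeaf inLeaf).dist (hslRoot s ℓ D a') v +
        (hsl s ℓ D outLeaf inLeaf).dist v (hslRoot s ℓ D a) := hGconn.dist_triangle
    rw [SimpleGraph.dist_comm (u := hslRoot s ℓ D a') (v := v)] at h2
    have h3 := phi_root' (s := s) (ℓ := ℓ) (H := H) (D := D) a a' hne.symm
    have h4 : 1 ≤ H.dist a a' := hconn.pos_dist_of_ne hne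
    have h5 : 1 * (2 * ℓ + 1) ≤ H.dist a a' * (2 * ℓ + 1) := Nat.mul_le_mul_right _ h4
    have hva1 : (hsl s ℓ D outLeaf inLeaf).dist v (hslRoot s ℓ D a) ≤ s + ℓ := hva
    have hva2 : (hsl s ℓ D outLeaf inLeaf).dist v (hslRoot s ℓ D a') ≤ s + ℓ := hva'
    omega
  constructor
  · intro v
    have hex : ∃ a : A, v ∈ hslBall s ℓ D outLeaf inLeaf a := by
      rcases v with ⟨c, l⟩ | ⟨e, i⟩
      · obtain ⟨p, hp⟩ := walk_tree (D := D) (outLeaf := outLeaf) (inLeaf := inLeaf)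
          c l.val l.prop
        refine ⟨c, ?_⟩
        have : (hsl s ℓ D outLeaf inLeaf).dist (Sum.inl (c, l)) (hslRoot s ℓ D c) ≤ p.length :=
          SimpleGraph.dist_le p
        have hls := l.prop
        show (hsl s ℓ D outLeaf inLeaf).dist _ _ ≤ s + ℓ
        omega
      · by_cases hi : (i : ℕ) + 1 ≤ ℓ
        · obtain ⟨p, hp⟩ := walk_path_out e (houtlen _ _ e.prop) i.val i.isLt
          refine ⟨e.val.1, ?_⟩
          have : (hsl s ℓ D outLeaf inLeaf).dist (Sum.inr (e, i)) (hslRoot s ℓ D e.val.1) ≤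
              p.length := SimpleGraph.dist_le p
          show (hsl s ℓ D outLeaf inLeaf).dist _ _ ≤ s + ℓ
          omega
        · obtain ⟨p, hp⟩ := walk_path_in e (hinlen _ _ e.prop) i.val i.isLt
          refine ⟨e.val.2, ?_⟩
          have : (hsl s ℓ D outLeaf inLeaf).dist (Sum.inr (e, i)) (hslRoot s ℓ D e.val.2) ≤
              p.length := SimpleGraph.dist_le p
          show (hsl s ℓ D outLeaf inLeaf).dist _ _ ≤ s + ℓ
          omega
    obtain ⟨a, ha⟩ := hex
    refine ⟨a, ha, fun a' ha' => ?_⟩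
    by_contra hne
    exact hsep a' a hne v ha' ha
  · intro a b hne hnadj v hv w hw
    have hd1 : 1 ≤ H.dist a b := hconn.pos_dist_of_ne hne
    have hd1' : H.dist a b ≠ 1 := fun h => hnadj (SimpleGraph.dist_eq_one_iff_adj.1 h)
    have hd2 : 2 ≤ H.dist a b := by omega
    have h5 : 2 * (2 * ℓ + 1) ≤ H.dist a b * (2 * ℓ + 1) := Nat.mul_le_mul_right _ hd2
    have h1 : phi s ℓ H D a (hslRoot s ℓ D b) ≤
        (hsl s ℓ D outLeaf inLeaf).dist (hslRoot s ℓ D b) (hslRoot s ℓ D a) :=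
      phi_le_dist hGconn hconn hDor houtlen hinlen a _
    have h3 := phi_root' (s := s) (ℓ := ℓ) (H := H) (D := D) a b hne.symm
    have t1 : (hsl s ℓ D outLeaf inLeaf).dist (hslRoot s ℓ D b) (hslRoot s ℓ D a) ≤
        (hsl s ℓ D outLeaf inLeaf).dist (hslRoot s ℓ D b) w +
        (hsl s ℓ D outLeaf inLeaf).dist w (hslRoot s ℓ D a) := hGconn.dist_triangle
    have t2 : (hsl s ℓ D outLeaf inLeaf).dist w (hslRoot s ℓ D a) ≤
        (hsl s ℓ D outLeaf inLeaf).dist w v +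
        (hsl s ℓ D outLeaf inLeaf).dist v (hslRoot s ℓ D a) := hGconn.dist_triangle
    rw [SimpleGraph.dist_comm (u := hslRoot s ℓ D b) (v := w)] at t1
    rw [SimpleGraph.dist_comm (u := w) (v := v)] at t2
    have hv1 : (hsl s ℓ D outLeaf inLeaf).dist v (hslRoot s ℓ D a) ≤ s + ℓ := hv
    have hw1 : (hsl s ℓ D outLeaf inLeaf).dist w (hslRoot s ℓ D b) ≤ s + ℓ := hw
    omega
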